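/- arXiv:2101.08855 — 3 statements merged into one kernel-verified Lean document; each statement's English description precedes it below -/
import Mathlib

section
/- Let 0 < T_e < ℓ < T_r be real numbers. There exist real numbers t and z with z ≥ 0 satisfying ℓ² + z² ≤ t², z² ≤ (T_r − t)² with t ≤ T_r, and z² ≥ (T_e − t)², if and only if T_e · T_r ≥ ℓ². -/
/-!
In the null coordinates `u = t - z`, `v = t + z` the conditions say `ℓ² ≤ u v` together with
`u ≤ Te ≤ v ≤ Tr`. Since `v > 0` forces `u ≥ 0`, the product `u v` is maximised at the corner
`(u, v) = (Te, Tr)`, which is itself admissible; so the region is non-empty iff `ℓ² ≤ Te Tr`.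
-/

lemma sq_le_sq_sub_and_le_iff_add_le {z t T : ℝ} (hz : 0 ≤ z) :
    z ^ 2 ≤ (T - t) ^ 2 ∧ t ≤ T ↔ t + z ≤ T := by
  constructor
  · rintro ⟨h, ht⟩
    have := (sq_le_sq₀ hz (sub_nonneg.2 ht)).1 h
    linarith
  · intro h
    exact ⟨pow_le_pow_left₀ hz (by linarith) 2, by linarith⟩

lemma sq_sub_le_sq_iff {z t T : ℝ} (hz : 0 ≤ z) :
    (T - t) ^ 2 ≤ z ^ 2 ↔ t - z ≤ T ∧ T ≤ t + z := by
  constructor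
  · intro h
    obtain ⟨h₁, h₂⟩ := abs_le_of_sq_le_sq' h hz
    constructor <;> linarith
  · rintro ⟨h₁, h₂⟩
    exact sq_le_sq' (by linarith) (by linarith)

lemma sq_le_mul_of_sq_le_mul {ℓ u v a b : ℝ} (hv : 0 < v) (h : ℓ ^ 2 ≤ u * v)
    (hu : u ≤ a) (hvb : v ≤ b) : ℓ ^ 2 ≤ a * b := by
  have hu₀ : 0 ≤ u := nonneg_of_mul_nonneg_left ((sq_nonneg ℓ).trans h) hv
  exact h.trans (mul_le_mul hu hvb hv.le (hu₀.trans hu))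

theorem stmt_2 (Te ℓ Tr : ℝ) (h0 : 0 < Te) (h1 : Te < ℓ) (h2 : ℓ < Tr) :
    (∃ t z : ℝ, 0 ≤ z ∧ ℓ ^ 2 + z ^ 2 ≤ t ^ 2 ∧ z ^ 2 ≤ (Tr - t) ^ 2 ∧ t ≤ Tr ∧
      (Te - t) ^ 2 ≤ z ^ 2) ↔ ℓ ^ 2 ≤ Te * Tr := by
  have null_mul (t z : ℝ) : (t - z) * (t + z) = t ^ 2 - z ^ 2 := by ring
  constructor
  · rintro ⟨t, z, hz, hℓ, hTr, htTr, hTe⟩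
    have hv : t + z ≤ Tr := (sq_le_sq_sub_and_le_iff_add_le hz).1 ⟨hTr, htTr⟩
    obtain ⟨hu, hTe_le⟩ := (sq_sub_le_sq_iff hz).1 hTe
    have hℓ_uv : ℓ ^ 2 ≤ (t - z) * (t + z) := by linarith [null_mul t z]
    exact sq_le_mul_of_sq_le_mul (by linarith) hℓ_uv hu hv
  · intro h
    obtain ⟨t, z, hu, hv⟩ : ∃ t z : ℝ, t - z = Te ∧ t + z = Tr :=
      ⟨(Te + Tr) / 2, (Tr - Te) / 2, by ring, by ring⟩
    have hz : 0 ≤ z := by linarith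
    obtain ⟨hTr, htTr⟩ := (sq_le_sq_sub_and_le_iff_add_le (T := Tr) hz).2 hv.le
    refine ⟨t, z, hz, ?_, hTr, htTr, (sq_sub_le_sq_iff hz).2 ⟨hu.le, by linarith⟩⟩
    rw [← hu, ← hv, null_mul] at h
    linarith
end

section
/- Let ρ and σ be density matrices on a finite-dimensional complex Hilbert space. Then (1/2)·‖ρ − σ‖₁ ≤ √(1 − F(ρ, σ)), where F(ρ, σ) = (Tr√(√σ · ρ · √σ))² is the fidelity. -/
/-!
Let `E` be the spectral projection of `ρ - σ` onto its nonnegative eigenspace, so that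
`½‖ρ - σ‖₁ = p - q` with `p = Tr Eρ`, `q = Tr Eσ`. Writing the polar decomposition
`|√ρ√σ| = C† √ρ √σ` with a contraction `C` and splitting `1 = E + (1 - E)`, Cauchy–Schwarz for
the Hilbert–Schmidt inner product gives `√F ≤ √(pq) + √((1-p)(1-q))`, the Bhattacharyya coefficient
of the Bernoulli distributions `(p, 1-p)` and `(q, 1-q)`. For those the inequality is elementary:
`(√(pq) + √((1-p)(1-q)))² ≤ (q + 1 - p)(p + 1 - q) = 1 - (p - q)²` by Cauchy–Schwarz in `ℝ²`.
-/

open Matrix ComplexOrder Classical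

/-- The square root of a positive semidefinite matrix, as `Matrix.PosSemidef.sqrt` was defined in
the older Mathlib (removed since). -/
noncomputable def Matrix.PosSemidef.sqrt {n : Type*} [Fintype n] [DecidableEq n]
    {A : Matrix n n ℂ} (hA : A.PosSemidef) : Matrix n n ℂ :=
  hA.1.eigenvectorUnitary.1 * diagonal ((↑) ∘ (√·) ∘ hA.1.eigenvalues) *
    (star hA.1.eigenvectorUnitary : Matrix n n ℂ)

/-- The trace norm `Tr √(AᴴA)` of a complex matrix. -/
noncomputable def traceNorm {n : Type*} [Fintype n] [DecidableEq n]
    (A : Matrix n n ℂ) : ℝ :=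
  ((Matrix.posSemidef_conjTranspose_mul_self A).sqrt.trace).re

/-- `Tr √A` for a positive semidefinite matrix (junk value `0` otherwise). -/
noncomputable def traceSqrt {n : Type*} [Fintype n] [DecidableEq n]
    (A : Matrix n n ℂ) : ℝ :=
  if h : A.PosSemidef then (h.sqrt.trace).re else 0

/-- The fidelity `F(ρ,σ) = (Tr √(√σ ρ √σ))²` (junk value if `σ` is not PSD). -/
noncomputable def fidelity {n : Type*} [Fintype n] [DecidableEq n]
    (ρ σ : Matrix n n ℂ) : ℝ :=
  if h : σ.PosSemidef then (traceSqrt (h.sqrt * ρ * h.sqrt)) ^ 2 else 0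

theorem sq_sqrt_mul_sqrt_add_sqrt_mul_sqrt_le_one_sub_sq_sub {p q : ℝ} (hp₀ : 0 ≤ p)
    (hp₁ : p ≤ 1) (hq₀ : 0 ≤ q) (hq₁ : q ≤ 1) :
    (√p * √q + √(1 - p) * √(1 - q)) ^ 2 ≤ 1 - (p - q) ^ 2 := by
  have hp := Real.sq_sqrt hp₀
  have hq := Real.sq_sqrt hq₀
  have hp' := Real.sq_sqrt (sub_nonneg.2 hp₁)
  have hq' := Real.sq_sqrt (sub_nonneg.2 hq₁)
  nlinarith [sq_nonneg (√q * √(1 - q) - √p * √(1 - p))]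

open scoped MatrixOrder

theorem Matrix.re_trace_mono {n : Type*} [Fintype n] {A B : Matrix n n ℂ} (h : A ≤ B) :
    A.trace.re ≤ B.trace.re :=
  (Complex.le_def.mp ((tracePositiveLinearMap n ℂ ℂ).mono h)).1

section

variable {n : Type*} [Fintype n] [DecidableEq n]

namespace Matrix

theorem PosSemidef.sqrt_eq_cfcSqrt {A : Matrix n n ℂ} (hA : A.PosSemidef) :
    hA.sqrt = CFC.sqrt A := by
  rw [CFC.sqrt_eq_real_sqrt A hA.nonneg, cfcₙ_eq_cfc, hA.1.cfc_eq]
  rfl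

theorem cfc_mul_cfc (f g : ℝ → ℝ) (A : Matrix n n ℂ) :
    cfc f A * cfc g A = cfc (fun x => f x * g x) A :=
  (cfc_mul f g A (finite_real_spectrum.continuousOn f) (finite_real_spectrum.continuousOn g)).symm

theorem re_trace_mul_nonneg {A B : Matrix n n ℂ} (hA : 0 ≤ A) (hB : 0 ≤ B) :
    0 ≤ (A * B).trace.re := by
  have h : 0 ≤ CFC.sqrt A * B * CFC.sqrt A :=
    IsSelfAdjoint.conjugate_nonneg hB (CFC.sqrt_nonneg A).isSelfAdjoint
  rw [← CFC.sqrt_mul_sqrt_self A hA, mul_assoc, trace_mul_comm]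
  simpa using re_trace_mono h

theorem norm_trace_mul_conjTranspose_le (A B : Matrix n n ℂ) :
    ‖(B * Aᴴ).trace‖ ≤ √(A * Aᴴ).trace.re * √(B * Bᴴ).trace.re := by
  let _ := toMatrixSeminormedAddCommGroup (1 : Matrix n n ℂ) PosSemidef.one
  let _ := toMatrixInnerProductSpace (1 : Matrix n n ℂ) PosSemidef.one
  have h := norm_inner_le_norm (𝕜 := ℂ) A B
  rw [norm_eq_sqrt_re_inner (𝕜 := ℂ) A, norm_eq_sqrt_re_inner (𝕜 := ℂ) B] at h
  change ‖(B * 1 * Aᴴ).trace‖ ≤ √(A * 1 * Aᴴ).trace.re * √(B * 1 * Bᴴ).trace.re at h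
  simpa only [mul_one] using h

theorem trace_sqrt_mul_sqrt_mul_conjTranspose {X Y : Matrix n n ℂ} (hX : 0 ≤ X) (hY : 0 ≤ Y) :
    (CFC.sqrt Y * CFC.sqrt X * (CFC.sqrt Y * CFC.sqrt X)ᴴ).trace = (Y * X).trace := by
  rw [conjTranspose_mul, (CFC.sqrt_nonneg X).posSemidef.1.eq, (CFC.sqrt_nonneg Y).posSemidef.1.eq,
    mul_assoc, ← mul_assoc (CFC.sqrt X), CFC.sqrt_mul_sqrt_self X, ← mul_assoc, trace_mul_comm,
    ← mul_assoc, CFC.sqrt_mul_sqrt_self Y]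

theorem exists_conjTranspose_mul_eq_cfcAbs (M : Matrix n n ℂ) :
    ∃ C : Matrix n n ℂ, Cᴴ * M = CFC.abs M ∧ C * Cᴴ ≤ 1 := by
  have hMM : Mᴴ * M = CFC.abs M * CFC.abs M := (CFC.abs_mul_abs M).symm
  set H := CFC.abs M
  have hH : cfc (id : ℝ → ℝ) H = H := cfc_id ℝ H (CFC.abs_nonneg M).isSelfAdjoint
  -- the Moore–Penrose pseudo-inverse of `H`, since `(0 : ℝ)⁻¹ = 0`
  set G := cfc (fun x : ℝ => x⁻¹) H
  have hGHH : G * (cfc (id : ℝ → ℝ) H * cfc (id : ℝ → ℝ) H) = cfc (id : ℝ → ℝ) H := by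
    simp only [G, cfc_mul_cfc]
    congr 1; funext x
    by_cases hx : x = 0 <;> simp [hx]
  have hGGHHGG : G * G * (cfc (id : ℝ → ℝ) H * cfc (id : ℝ → ℝ) H) * (G * G) = G * G := by
    simp only [G, cfc_mul_cfc]
    congr 1; funext x
    rcases eq_or_ne x 0 with rfl | hx
    · simp
    · field_simp; simp
  rw [hH] at hGHH hGGHHGG
  have hG : Gᴴ = G := (cfc_predicate _ H : IsSelfAdjoint G)
  refine ⟨M * G, ?_, IsStarProjection.le_one ⟨?_, .mul_star_self _⟩⟩
  · rw [conjTranspose_mul, hG, mul_assoc, hMM, hGHH]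
  · show M * G * (M * G)ᴴ * (M * G * (M * G)ᴴ) = M * G * (M * G)ᴴ
    rw [conjTranspose_mul, hG]
    calc M * G * (G * Mᴴ) * (M * G * (G * Mᴴ)) = M * (G * G * (Mᴴ * M) * (G * G)) * Mᴴ := by
          noncomm_ring
      _ = M * G * (G * Mᴴ) := by rw [hMM, hGGHHGG]; noncomm_ring

theorem norm_trace_conjTranspose_mul_sqrt_mul_mul_sqrt_le {ρ σ E C : Matrix n n ℂ} (hρ : 0 ≤ ρ)
    (hσ : 0 ≤ σ) (hE : 0 ≤ E) (hC : C * Cᴴ ≤ 1) :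
    ‖(Cᴴ * CFC.sqrt ρ * E * CFC.sqrt σ).trace‖ ≤ √(E * ρ).trace.re * √(E * σ).trace.re := by
  set A := CFC.sqrt E * CFC.sqrt ρ
  have hA : (A * C) * (A * C)ᴴ ≤ A * Aᴴ := by
    simpa [mul_assoc, star_eq_conjTranspose] using star_right_conjugate_le_conjugate hC A
  have hCS := norm_trace_mul_conjTranspose_le (A * C) (CFC.sqrt E * CFC.sqrt σ)
  rw [trace_sqrt_mul_sqrt_mul_conjTranspose hσ hE] at hCS
  calc ‖(Cᴴ * CFC.sqrt ρ * E * CFC.sqrt σ).trace‖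
      = ‖(CFC.sqrt E * CFC.sqrt σ * (A * C)ᴴ).trace‖ := by
        rw [conjTranspose_mul, conjTranspose_mul, (CFC.sqrt_nonneg ρ).posSemidef.1.eq,
          (CFC.sqrt_nonneg E).posSemidef.1.eq, trace_mul_comm (CFC.sqrt E * _)]
        simp only [mul_assoc]
        rw [← mul_assoc (CFC.sqrt E) (CFC.sqrt E), CFC.sqrt_mul_sqrt_self E hE]
    _ ≤ √(A * C * (A * C)ᴴ).trace.re * √(E * σ).trace.re := hCS
    _ ≤ √(E * ρ).trace.re * √(E * σ).trace.re := by
        refine mul_le_mul_of_nonneg_right (Real.sqrt_le_sqrt ?_) (Real.sqrt_nonneg _)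
        rw [← trace_sqrt_mul_sqrt_mul_conjTranspose hρ hE]
        exact re_trace_mono hA

theorem re_trace_cfcAbs_sqrt_mul_sqrt_le {ρ σ E : Matrix n n ℂ} (hρ : 0 ≤ ρ) (hσ : 0 ≤ σ)
    (hE₀ : 0 ≤ E) (hE₁ : E ≤ 1) :
    (CFC.abs (CFC.sqrt ρ * CFC.sqrt σ)).trace.re ≤
      √(E * ρ).trace.re * √(E * σ).trace.re +
        √((1 - E) * ρ).trace.re * √((1 - E) * σ).trace.re := by
  obtain ⟨C, hCM, hC⟩ := exists_conjTranspose_mul_eq_cfcAbs (CFC.sqrt ρ * CFC.sqrt σ)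
  have hsplit : CFC.abs (CFC.sqrt ρ * CFC.sqrt σ) =
      Cᴴ * CFC.sqrt ρ * E * CFC.sqrt σ + Cᴴ * CFC.sqrt ρ * (1 - E) * CFC.sqrt σ := by
    rw [← hCM]; noncomm_ring
  rw [hsplit, trace_add, Complex.add_re]
  exact add_le_add
    ((Complex.re_le_norm _).trans
      (norm_trace_conjTranspose_mul_sqrt_mul_mul_sqrt_le hρ hσ hE₀ hC))
    ((Complex.re_le_norm _).trans
      (norm_trace_conjTranspose_mul_sqrt_mul_mul_sqrt_le hρ hσ (sub_nonneg.2 hE₁) hC))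

theorem IsHermitian.exists_mul_eq_posPart {Δ : Matrix n n ℂ} (hΔ : Δ.IsHermitian) :
    ∃ E : Matrix n n ℂ, 0 ≤ E ∧ E ≤ 1 ∧ E * Δ = Δ⁺ := by
  refine ⟨cfc (fun x : ℝ => if 0 ≤ x then 1 else 0) Δ, cfc_nonneg fun x _ => ?_,
    cfc_le_one _ _ fun x _ => ?_, ?_⟩
  · split_ifs <;> norm_num
  · split_ifs <;> norm_num
  · have hΔ' : IsSelfAdjoint Δ := hΔ
    conv_lhs => arg 2; rw [← cfc_id ℝ Δ]
    rw [cfc_mul_cfc, CFC.posPart_def, cfcₙ_eq_cfc]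
    congr 1; funext x
    split_ifs with hx
    · simp [hx]
    · simp [posPart_eq_zero.mpr (not_le.mp hx).le]

end Matrix

open Matrix

theorem traceNorm_eq_re_trace_cfcAbs (A : Matrix n n ℂ) :
    traceNorm A = (CFC.abs A).trace.re := by
  rw [traceNorm, PosSemidef.sqrt_eq_cfcSqrt]
  rfl

theorem Matrix.IsHermitian.exists_traceNorm_eq_two_mul_re_trace_mul {Δ : Matrix n n ℂ}
    (hΔ : Δ.IsHermitian) (hΔ₀ : Δ.trace = 0) :
    ∃ E : Matrix n n ℂ, 0 ≤ E ∧ E ≤ 1 ∧ traceNorm Δ = 2 * (E * Δ).trace.re := by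
  obtain ⟨E, hE₀, hE₁, hEΔ⟩ := hΔ.exists_mul_eq_posPart
  refine ⟨E, hE₀, hE₁, ?_⟩
  calc traceNorm Δ = (CFC.abs Δ + Δ).trace.re := by
        rw [traceNorm_eq_re_trace_cfcAbs, trace_add, hΔ₀, add_zero]
    _ = 2 * (E * Δ).trace.re := by
        rw [CFC.abs_add_self Δ hΔ.isSelfAdjoint, ← hEΔ, two_smul, trace_add, Complex.add_re]
        ring

theorem fidelity_eq_sq_re_trace_cfcAbs {ρ σ : Matrix n n ℂ} (hρ : ρ.PosSemidef)
    (hσ : σ.PosSemidef) :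
    fidelity ρ σ = (CFC.abs (CFC.sqrt ρ * CFC.sqrt σ)).trace.re ^ 2 := by
  have hσρσ : CFC.sqrt σ * ρ * CFC.sqrt σ =
      star (CFC.sqrt ρ * CFC.sqrt σ) * (CFC.sqrt ρ * CFC.sqrt σ) := by
    conv_lhs => rw [← CFC.sqrt_mul_sqrt_self ρ hρ.nonneg]
    rw [star_mul, (CFC.sqrt_nonneg ρ).isSelfAdjoint.star_eq,
      (CFC.sqrt_nonneg σ).isSelfAdjoint.star_eq]
    noncomm_ring
  have hpsd : (hσ.sqrt * ρ * hσ.sqrt).PosSemidef := by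
    rw [hσ.sqrt_eq_cfcSqrt, hσρσ]
    exact (star_mul_self_nonneg _).posSemidef
  rw [fidelity, dif_pos hσ, traceSqrt, dif_pos hpsd, PosSemidef.sqrt_eq_cfcSqrt]
  simp only [hσ.sqrt_eq_cfcSqrt, hσρσ]
  rfl

end

theorem stmt_8 {n : Type*} [Fintype n] [DecidableEq n]
    (ρ σ : Matrix n n ℂ)
    (hρ : ρ.PosSemidef) (hρ1 : ρ.trace = 1)
    (hσ : σ.PosSemidef) (hσ1 : σ.trace = 1) :
    (1 / 2) * traceNorm (ρ - σ) ≤ Real.sqrt (1 - fidelity ρ σ) := by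
  obtain ⟨E, hE₀, hE₁, hnorm⟩ := (hρ.1.sub hσ.1).exists_traceNorm_eq_two_mul_re_trace_mul
    (by rw [trace_sub, hρ1, hσ1, sub_self])
  set p := (E * ρ).trace.re
  set q := (E * σ).trace.re
  have hp : ((1 - E) * ρ).trace.re = 1 - p := by simp [p, sub_mul, trace_sub, hρ1]
  have hq : ((1 - E) * σ).trace.re = 1 - q := by simp [q, sub_mul, trace_sub, hσ1]
  have hp₀ : 0 ≤ p := re_trace_mul_nonneg hE₀ hρ.nonneg
  have hq₀ : 0 ≤ q := re_trace_mul_nonneg hE₀ hσ.nonneg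
  have hp₁ : 0 ≤ 1 - p := hp ▸ re_trace_mul_nonneg (sub_nonneg.2 hE₁) hρ.nonneg
  have hq₁ : 0 ≤ 1 - q := hq ▸ re_trace_mul_nonneg (sub_nonneg.2 hE₁) hσ.nonneg
  set t := (CFC.abs (CFC.sqrt ρ * CFC.sqrt σ)).trace.re
  have ht₀ : 0 ≤ t := by simpa using re_trace_mono (CFC.abs_nonneg (CFC.sqrt ρ * CFC.sqrt σ))
  have ht : t ≤ √p * √q + √(1 - p) * √(1 - q) :=
    hp ▸ hq ▸ re_trace_cfcAbs_sqrt_mul_sqrt_le hρ.nonneg hσ.nonneg hE₀ hE₁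
  have hpq := sq_sqrt_mul_sqrt_add_sqrt_mul_sqrt_le_one_sub_sq_sub hp₀ (sub_nonneg.1 hp₁) hq₀
    (sub_nonneg.1 hq₁)
  rw [hnorm, mul_sub, trace_sub, Complex.sub_re, fidelity_eq_sq_re_trace_cfcAbs hρ hσ]
  apply Real.le_sqrt_of_sq_le
  nlinarith [pow_le_pow_left₀ ht₀ ht 2]
end

section
/- Let ρ and σ be density matrices on a finite-dimensional complex Hilbert space with the support of ρ contained in the support of σ. Then −2·log₂ F^{1/2}(ρ, σ) ≤ D(ρ‖σ), where F(ρ,σ) = (Tr√(√σ ρ √σ))² is the fidelity and D(ρ‖σ) = Tr(ρ(log₂ ρ − log₂ σ)) is the quantum relative entropy. Equivalently, −log₂ F(ρ,σ) ≤ D(ρ‖σ). -/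
/-! Write `ρ = ∑ pᵢ |uᵢ⟩⟨uᵢ|`, `σ = ∑ qⱼ |vⱼ⟩⟨vⱼ|` and `cᵢⱼ = |⟨uᵢ, vⱼ⟩|²`, a doubly stochastic
matrix. Then `D(ρ‖σ) = ∑ cᵢⱼ pᵢ (log pᵢ - log qⱼ)` and `Re Tr (√ρ √σ) = ∑ cᵢⱼ √pᵢ √qⱼ` are the
relative entropy and the Bhattacharyya coefficient of the classical pair `Pᵢⱼ = cᵢⱼ pᵢ`,
`Qᵢⱼ = cᵢⱼ qⱼ` (Nussbaum–Szkoła). Concavity of `log` gives `-2 log ∑ √(Pᵢⱼ Qᵢⱼ) ≤ D(P‖Q)`, and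
`Re Tr (√ρ √σ) ≤ Tr |√ρ √σ| = Tr √(√σ ρ √σ) = √F(ρ, σ)`. -/

open Matrix ComplexOrder Classical

/-- Base-2 matrix logarithm of a Hermitian matrix, via the functional calculus
(junk value `0` if not Hermitian). -/
noncomputable def matLog2 {n : Type*} [Fintype n] [DecidableEq n]
    (A : Matrix n n ℂ) : Matrix n n ℂ :=
  if h : A.IsHermitian then h.cfc (Real.logb 2) else 0

/-- Quantum relative entropy `D(ρ‖σ) = Tr (ρ (log₂ ρ − log₂ σ))`. -/
noncomputable def relEnt {n : Type*} [Fintype n] [DecidableEq n]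
    (ρ σ : Matrix n n ℂ) : ℝ :=
  ((ρ * (matLog2 ρ - matLog2 σ)).trace).re

open scoped InnerProductSpace
open Real

namespace Matrix
variable {𝕜 n : Type*} [RCLike 𝕜] [Fintype n] [DecidableEq n] {A B : Matrix n n 𝕜}

lemma trace_diagonal_mul_mul_diagonal_mul_star (W : Matrix n n 𝕜) (d e : n → 𝕜) :
    (diagonal d * W * diagonal e * star W).trace
      = ∑ i, ∑ j, (‖W i j‖ ^ 2 : ℝ) * d i * e j := by
  refine Finset.sum_congr rfl fun i _ => ?_
  rw [diag_apply, mul_apply]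
  refine Finset.sum_congr rfl fun j _ => ?_
  rw [mul_diagonal, diagonal_mul, star_apply, RCLike.star_def, RCLike.ofReal_pow,
    ← RCLike.mul_conj]
  ring

lemma trace_toEuclideanLin (B : Matrix n n 𝕜) :
    (toEuclideanLin B).trace 𝕜 _ = B.trace := by
  rw [LinearMap.trace_eq_matrix_trace 𝕜 (PiLp.basisFun 2 𝕜 n), toEuclideanLin, toLpLin_eq_toLin,
    LinearMap.toMatrix_toLin]

namespace IsHermitian

lemma cfc_id (hA : A.IsHermitian) : hA.cfc id = A := by
  rw [← hA.cfc_eq, _root_.cfc_id ℝ A hA.isSelfAdjoint]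

lemma trace_cfc (hA : A.IsHermitian) (f : ℝ → ℝ) :
    (hA.cfc f).trace = ∑ i, (f (hA.eigenvalues i) : 𝕜) := by
  rw [IsHermitian.cfc, Unitary.conjStarAlgAut_apply, trace_mul_cycle, Unitary.coe_star_mul_self,
    one_mul, trace_diagonal]
  rfl

noncomputable def eigenOverlap (hA : A.IsHermitian) (hB : B.IsHermitian) (i j : n) : ℝ :=
  ‖⟪hA.eigenvectorBasis i, hB.eigenvectorBasis j⟫_𝕜‖ ^ 2

lemma eigenOverlap_nonneg (hA : A.IsHermitian) (hB : B.IsHermitian) (i j : n) :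
    0 ≤ eigenOverlap hA hB i j :=
  sq_nonneg _

lemma sum_eigenOverlap (hA : A.IsHermitian) (hB : B.IsHermitian) (i : n) :
    ∑ j, eigenOverlap hA hB i j = 1 := by
  simp [eigenOverlap, OrthonormalBasis.sum_sq_norm_inner_left]

lemma eigenOverlap_self (hA : A.IsHermitian) (i j : n) :
    eigenOverlap hA hA i j = if i = j then 1 else 0 := by
  rw [eigenOverlap, orthonormal_iff_ite.mp hA.eigenvectorBasis.orthonormal]
  split_ifs <;> simp

lemma star_eigenvectorUnitary_mul_apply (hA : A.IsHermitian) (hB : B.IsHermitian) (i j : n) :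
    (star (hA.eigenvectorUnitary : Matrix n n 𝕜) * (hB.eigenvectorUnitary : Matrix n n 𝕜)) i j
      = ⟪hA.eigenvectorBasis i, hB.eigenvectorBasis j⟫_𝕜 := by
  simp [mul_apply, EuclideanSpace.inner_eq_star_dotProduct, dotProduct, mul_comm]

lemma re_trace_cfc_mul_cfc (hA : A.IsHermitian) (hB : B.IsHermitian) (f g : ℝ → ℝ) :
    RCLike.re (hA.cfc f * hB.cfc g).trace
      = ∑ i, ∑ j, eigenOverlap hA hB i j * f (hA.eigenvalues i) * g (hB.eigenvalues j) := by
  have hconj : (hA.cfc f * hB.cfc g).trace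
      = (diagonal (RCLike.ofReal ∘ f ∘ hA.eigenvalues)
          * (star (hA.eigenvectorUnitary : Matrix n n 𝕜) * (hB.eigenvectorUnitary : Matrix n n 𝕜))
          * diagonal (RCLike.ofReal ∘ g ∘ hB.eigenvalues)
          * star (star (hA.eigenvectorUnitary : Matrix n n 𝕜)
            * (hB.eigenvectorUnitary : Matrix n n 𝕜))).trace := by
    simp only [IsHermitian.cfc, Unitary.conjStarAlgAut_apply, star_mul, star_star, mul_assoc]
    rw [trace_mul_comm]
    simp only [mul_assoc]
  simp only [hconj, trace_diagonal_mul_mul_diagonal_mul_star, star_eigenvectorUnitary_mul_apply,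
    map_sum, Function.comp_apply, ← RCLike.ofReal_mul, RCLike.ofReal_re, eigenOverlap]

lemma toEuclideanLin_eigenvectorBasis (hA : A.IsHermitian) (i : n) :
    toEuclideanLin A (hA.eigenvectorBasis i) = (hA.eigenvalues i : 𝕜) • hA.eigenvectorBasis i := by
  rw [toLpLin_apply, mulVec_eigenvectorBasis, RCLike.real_smul_eq_coe_smul (K := 𝕜)]
  rfl

lemma eigenOverlap_mul_eigenvalues_eq_zero (hA : A.IsHermitian) (hB : B.IsHermitian)
    (hker : ∀ v, B *ᵥ v = 0 → A *ᵥ v = 0) {i j : n} (hj : hB.eigenvalues j = 0) :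
    eigenOverlap hA hB i j * hA.eigenvalues i = 0 := by
  have hAv : toEuclideanLin A (hB.eigenvectorBasis j) = 0 := by
    rw [toLpLin_apply, hker _ (by rw [mulVec_eigenvectorBasis, hj, zero_smul])]
    rfl
  have h : (hA.eigenvalues i : 𝕜) * ⟪hA.eigenvectorBasis i, hB.eigenvectorBasis j⟫_𝕜 = 0 := by
    rw [← RCLike.conj_ofReal, ← inner_smul_left, ← toEuclideanLin_eigenvectorBasis,
      isSymmetric_toEuclideanLin_iff.mpr hA, hAv, inner_zero_right]
  rcases mul_eq_zero.mp h with h | h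
  · rw [RCLike.ofReal_eq_zero.mp h, mul_zero]
  · rw [eigenOverlap, h, norm_zero, zero_pow two_ne_zero, zero_mul]

lemma norm_toEuclideanLin_eigenvectorBasis (h : (Bᴴ * B).IsHermitian) (i : n) :
    ‖toEuclideanLin B (h.eigenvectorBasis i)‖ = √(h.eigenvalues i) := by
  rw [← Real.sqrt_sq (norm_nonneg _), @norm_sq_eq_re_inner 𝕜, ← LinearMap.adjoint_inner_right,
    ← toEuclideanLin_conjTranspose_eq_adjoint, ← LinearMap.comp_apply, ← toLpLin_mul_same,
    toEuclideanLin_eigenvectorBasis, inner_smul_right, inner_self_eq_norm_sq_to_K,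
    h.eigenvectorBasis.orthonormal.1 i]
  simp

end IsHermitian

lemma re_trace_le_sum_sqrt_eigenvalues (B : Matrix n n 𝕜) (h : (Bᴴ * B).IsHermitian) :
    RCLike.re B.trace ≤ ∑ i, √(h.eigenvalues i) := by
  rw [← trace_toEuclideanLin, LinearMap.trace_eq_sum_inner _ h.eigenvectorBasis, map_sum]
  refine Finset.sum_le_sum fun i _ => ?_
  calc _ ≤ ‖h.eigenvectorBasis i‖ * ‖toEuclideanLin B (h.eigenvectorBasis i)‖ :=
        re_inner_le_norm _ _
    _ = _ := by
        rw [h.eigenvectorBasis.orthonormal.1 i, one_mul, h.norm_toEuclideanLin_eigenvectorBasis]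

end Matrix

namespace Matrix.PosSemidef
variable {n : Type*} [Fintype n] [DecidableEq n] {A : Matrix n n ℂ}

lemma sqrt_eq_cfc (hA : A.PosSemidef) : hA.sqrt = cfc Real.sqrt A := by
  rw [hA.1.cfc_eq, IsHermitian.cfc, Unitary.conjStarAlgAut_apply]
  rfl

lemma conjTranspose_sqrt (hA : A.PosSemidef) : hA.sqrtᴴ = hA.sqrt := by
  rw [sqrt_eq_cfc]
  exact cfc_predicate Real.sqrt A

lemma sqrt_mul_sqrt (hA : A.PosSemidef) : hA.sqrt * hA.sqrt = A := by
  rw [sqrt_eq_cfc, ← cfc_mul Real.sqrt Real.sqrt A]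
  conv_rhs => rw [← cfc_id ℝ A hA.1.isSelfAdjoint]
  refine cfc_congr fun x hx => Real.mul_self_sqrt ?_
  rw [hA.1.spectrum_real_eq_range_eigenvalues] at hx
  obtain ⟨i, rfl⟩ := hx
  exact hA.eigenvalues_nonneg i

lemma traceSqrt_eq_sum (hA : A.PosSemidef) : traceSqrt A = ∑ i, √(hA.1.eigenvalues i) := by
  rw [traceSqrt, dif_pos hA, sqrt_eq_cfc, hA.1.cfc_eq, hA.1.trace_cfc, Complex.re_sum]
  simp

end Matrix.PosSemidef

lemma mul_log_sub_log_le {p q B : ℝ} (hp : 0 ≤ p) (hq : 0 ≤ q) (hpq : q = 0 → p = 0) (hB : 0 < B) :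
    p * (log q - log p) ≤ 2 * (√p * √q / B - p) + 2 * p * log B := by
  rcases hp.eq_or_lt with rfl | hp
  · simp
  have hq : 0 < q := hq.lt_of_ne fun h => hp.ne' (hpq h.symm)
  have hsp : 0 < √p := sqrt_pos.mpr hp
  have hsq : 0 < √q := sqrt_pos.mpr hq
  -- `log x ≤ x - 1` at `x = √(q / p) / B`
  have key := log_le_sub_one_of_pos (div_pos hsq (mul_pos hsp hB))
  rw [log_div hsq.ne' (mul_pos hsp hB).ne', log_mul hsp.ne' hB.ne', log_sqrt hp.le,
    log_sqrt hq.le] at key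
  have hpx : p * (√q / (√p * B)) = √p * √q / B := by
    nth_rewrite 1 [← mul_self_sqrt hp.le]
    field_simp
  nlinarith

lemma sum_mul_sqrt_mul_sqrt_pos {ι κ : Type*} [Fintype ι] [Fintype κ]
    {c : ι → κ → ℝ} {p : ι → ℝ} {q : κ → ℝ} (hc : ∀ i j, 0 ≤ c i j) (hp : ∀ i, 0 ≤ p i)
    (hq : ∀ j, 0 ≤ q j) (hsum : ∑ i, ∑ j, c i j * p i = 1)
    (hsupp : ∀ i j, q j = 0 → c i j * p i = 0) :
    0 < ∑ i, ∑ j, c i j * √(p i) * √(q j) := by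
  have hterm : ∀ i j, 0 ≤ c i j * √(p i) * √(q j) := fun i j => by have := hc i j; positivity
  obtain ⟨i, j, hij⟩ : ∃ i j, c i j * p i ≠ 0 := by
    by_contra! h
    simp [h] at hsum
  have hqj : q j ≠ 0 := fun h => hij (hsupp i j h)
  obtain ⟨hcij, hpi⟩ := mul_ne_zero_iff.mp hij
  refine Finset.sum_pos' (fun i _ => Finset.sum_nonneg fun j _ => hterm i j)
    ⟨i, Finset.mem_univ _, Finset.sum_pos' (fun j _ => hterm i j) ⟨j, Finset.mem_univ _, ?_⟩⟩
  have := (hc i j).lt_of_ne' hcij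
  have := sqrt_pos.mpr ((hp i).lt_of_ne' hpi)
  have := sqrt_pos.mpr ((hq j).lt_of_ne' hqj)
  positivity

theorem neg_two_mul_log_le_sum_mul_log_sub_log {ι κ : Type*} [Fintype ι] [Fintype κ]
    {c : ι → κ → ℝ} {p : ι → ℝ} {q : κ → ℝ} (hc : ∀ i j, 0 ≤ c i j) (hp : ∀ i, 0 ≤ p i)
    (hq : ∀ j, 0 ≤ q j) (hsum : ∑ i, ∑ j, c i j * p i = 1)
    (hsupp : ∀ i j, q j = 0 → c i j * p i = 0) {t : ℝ}
    (ht : ∑ i, ∑ j, c i j * √(p i) * √(q j) ≤ t) :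
    -2 * log t ≤ ∑ i, ∑ j, c i j * p i * (log (p i) - log (q j)) := by
  set B := ∑ i, ∑ j, c i j * √(p i) * √(q j)
  have hB : 0 < B := sum_mul_sqrt_mul_sqrt_pos hc hp hq hsum hsupp
  have hpt : ∀ i j, c i j * (p i * (log (q j) - log (p i)))
      ≤ c i j * (2 * (√(p i) * √(q j) / B - p i) + 2 * p i * log B) := by
    intro i j
    rcases (hc i j).eq_or_lt with h | h
    · simp [← h]
    refine mul_le_mul_of_nonneg_left (mul_log_sub_log_le (hp i) (hq j) (fun h0 => ?_) hB) h.le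
    exact (mul_eq_zero.mp (hsupp i j h0)).resolve_left h.ne'
  have hrhs : ∑ i, ∑ j, c i j * (2 * (√(p i) * √(q j) / B - p i) + 2 * p i * log B)
      = 2 / B * B - 2 * (∑ i, ∑ j, c i j * p i) + 2 * log B * ∑ i, ∑ j, c i j * p i := by
    have h : ∀ i j, c i j * (2 * (√(p i) * √(q j) / B - p i) + 2 * p i * log B)
        = 2 / B * (c i j * √(p i) * √(q j)) - 2 * (c i j * p i) + 2 * log B * (c i j * p i) :=
      fun i j => by ring
    simp only [h, Finset.sum_add_distrib, Finset.sum_sub_distrib, ← Finset.mul_sum, B]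
  have hlhs : ∑ i, ∑ j, c i j * (p i * (log (q j) - log (p i)))
      = -∑ i, ∑ j, c i j * p i * (log (p i) - log (q j)) := by
    simp only [← Finset.sum_neg_distrib]
    refine Finset.sum_congr rfl fun i _ => Finset.sum_congr rfl fun j _ => ?_
    ring
  have hle := Finset.sum_le_sum fun i (_ : i ∈ Finset.univ) =>
    Finset.sum_le_sum fun j (_ : j ∈ Finset.univ) => hpt i j
  rw [hrhs, hlhs, hsum, div_mul_cancel₀ _ hB.ne'] at hle
  linarith [log_le_log hB ht]

section QuantumDivergences
variable {n : Type*} [Fintype n] [DecidableEq n] {ρ σ : Matrix n n ℂ}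

lemma traceSqrt_nonneg (A : Matrix n n ℂ) : 0 ≤ traceSqrt A := by
  by_cases hA : A.PosSemidef
  · rw [hA.traceSqrt_eq_sum]
    exact Finset.sum_nonneg fun i _ => Real.sqrt_nonneg _
  · rw [traceSqrt, dif_neg hA]

lemma fidelity_nonneg (ρ σ : Matrix n n ℂ) : 0 ≤ fidelity ρ σ := by
  unfold fidelity
  split_ifs <;> positivity

lemma re_trace_le_traceSqrt (B : Matrix n n ℂ) : B.trace.re ≤ traceSqrt (Bᴴ * B) := by
  rw [(posSemidef_conjTranspose_mul_self B).traceSqrt_eq_sum]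
  exact Matrix.re_trace_le_sum_sqrt_eigenvalues B _

lemma re_trace_sqrt_mul_sqrt_le_sqrt_fidelity (hρ : ρ.PosSemidef) (hσ : σ.PosSemidef) :
    (hρ.sqrt * hσ.sqrt).trace.re ≤ √(fidelity ρ σ) := by
  have h : (hρ.sqrt * hσ.sqrt)ᴴ * (hρ.sqrt * hσ.sqrt) = hσ.sqrt * ρ * hσ.sqrt := by
    rw [conjTranspose_mul, hρ.conjTranspose_sqrt, hσ.conjTranspose_sqrt, mul_assoc,
      ← mul_assoc hρ.sqrt, hρ.sqrt_mul_sqrt, mul_assoc]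
  rw [fidelity, dif_pos hσ, Real.sqrt_sq (traceSqrt_nonneg _), ← h]
  exact re_trace_le_traceSqrt _

lemma relEnt_eq_sum (hρ : ρ.IsHermitian) (hσ : σ.IsHermitian) :
    relEnt ρ σ = ∑ i, ∑ j, hρ.eigenOverlap hσ i j * hρ.eigenvalues i
      * (logb 2 (hρ.eigenvalues i) - logb 2 (hσ.eigenvalues j)) := by
  have hρρ := hρ.re_trace_cfc_mul_cfc hρ id (logb 2)
  have hρσ := hρ.re_trace_cfc_mul_cfc hσ id (logb 2)
  simp only [hρ.cfc_id, hρ.eigenOverlap_self, RCLike.re_to_complex, id, ite_mul, one_mul, zero_mul,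
    Finset.sum_ite_eq, Finset.mem_univ, if_true] at hρρ hρσ
  rw [relEnt, matLog2, matLog2, dif_pos hρ, dif_pos hσ, mul_sub, trace_sub, Complex.sub_re, hρρ,
    hρσ]
  simp only [mul_sub, Finset.sum_sub_distrib, mul_assoc, ← Finset.sum_mul, hρ.sum_eigenOverlap, one_mul]

lemma re_trace_sqrt_mul_sqrt_eq_sum (hρ : ρ.PosSemidef) (hσ : σ.PosSemidef) :
    (hρ.sqrt * hσ.sqrt).trace.re = ∑ i, ∑ j, hρ.1.eigenOverlap hσ.1 i j
      * √(hρ.1.eigenvalues i) * √(hσ.1.eigenvalues j) := by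
  rw [hρ.sqrt_eq_cfc, hσ.sqrt_eq_cfc, hρ.1.cfc_eq, hσ.1.cfc_eq, ← RCLike.re_to_complex,
    hρ.1.re_trace_cfc_mul_cfc]

lemma sum_eigenvalues_eq_one (hρ : ρ.IsHermitian) (hρ1 : ρ.trace = 1) :
    ∑ i, hρ.eigenvalues i = 1 := by
  simpa using congrArg Complex.re (hρ.trace_eq_sum_eigenvalues.symm.trans hρ1)

end QuantumDivergences

theorem stmt_9_general {n : Type*} [Fintype n] [DecidableEq n]
    (ρ σ : Matrix n n ℂ)
    (hρ : ρ.PosSemidef) (hρ1 : ρ.trace = 1)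
    (hσ : σ.PosSemidef)
    (hsupp : ∀ v : n → ℂ, σ.mulVec v = 0 → ρ.mulVec v = 0) :
    -2 * Real.logb 2 (Real.sqrt (fidelity ρ σ)) ≤ relEnt ρ σ ∧
    -Real.logb 2 (fidelity ρ σ) ≤ relEnt ρ σ := by
  have hsqrt : -2 * logb 2 √(fidelity ρ σ) ≤ relEnt ρ σ := by
    have hkey := neg_two_mul_log_le_sum_mul_log_sub_log (hρ.1.eigenOverlap_nonneg hσ.1)
      hρ.eigenvalues_nonneg hσ.eigenvalues_nonneg
      (by simp [← Finset.sum_mul, hρ.1.sum_eigenOverlap, sum_eigenvalues_eq_one hρ.1 hρ1])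
      (fun i j hj => hρ.1.eigenOverlap_mul_eigenvalues_eq_zero hσ.1 hsupp hj)
      ((re_trace_sqrt_mul_sqrt_eq_sum hρ hσ).symm.trans_le
        (re_trace_sqrt_mul_sqrt_le_sqrt_fidelity hρ hσ))
    rw [relEnt_eq_sum hρ.1 hσ.1]
    simp only [logb, ← sub_div, ← mul_div_assoc, ← Finset.sum_div]
    exact div_le_div_of_nonneg_right hkey (log_nonneg one_le_two)
  have hlog : logb 2 (fidelity ρ σ) = 2 * logb 2 √(fidelity ρ σ) := by
    rw [logb, logb, log_sqrt (fidelity_nonneg ρ σ)]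
    ring
  exact ⟨hsqrt, by linarith⟩

theorem stmt_9 {n : Type*} [Fintype n] [DecidableEq n]
    (ρ σ : Matrix n n ℂ)
    (hρ : ρ.PosSemidef) (hρ1 : ρ.trace = 1)
    (hσ : σ.PosSemidef) (hσ1 : σ.trace = 1)
    (hsupp : ∀ v : n → ℂ, σ.mulVec v = 0 → ρ.mulVec v = 0) :
    -2 * Real.logb 2 (Real.sqrt (fidelity ρ σ)) ≤ relEnt ρ σ ∧
    -Real.logb 2 (fidelity ρ σ) ≤ relEnt ρ σ :=
  stmt_9_general ρ σ hρ hρ1 hσ hsupp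
end
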